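/- Let n ≥ 1, a b : Fin n → WithBot ℝ, x : Fin n → ℝ, and let ∼ be either ≥ or > (on WithBot ℝ, where ε = ⊥ is the least element). Define S₁ = {i : Fin n | a i ≠ ε ∧ a i ∼ b i} and S₂ = {j : Fin n | b j ≠ ε ∧ ¬(a j ∼ b j)}. Then max over i : Fin n of ((x i : WithBot ℝ) + a i) ∼ max over j : Fin n of ((x j : WithBot ℝ) + b j) holds if and only if max over i ∈ S₁ of ((x i : WithBot ℝ) + a i) ∼ max over j ∈ S₂ of ((x j : WithBot ℝ) + b j) holds, where a maximum over an empty set is ε. -/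

import Mathlib

open scoped Classical

theorem maxplus_aux_ge {n : ℕ} (a b f g : Fin n → WithBot ℝ)
    (hbf : ∀ i, a i = ⊥ → f i = ⊥)
    (hbg : ∀ j, b j = ⊥ → g j = ⊥)
    (hm' : ∀ i, b i ≤ a i → g i ≤ f i)
    (hs : ∀ i, a i < b i → f i < g i) :
    (Finset.univ.sup g ≤ Finset.univ.sup f) ↔
    ((Finset.univ.filter fun j => b j ≠ ⊥ ∧ ¬ b j ≤ a j).sup g ≤
      (Finset.univ.filter fun i => a i ≠ ⊥ ∧ b i ≤ a i).sup f) := by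
  set A' := (Finset.univ.filter fun i => a i ≠ ⊥ ∧ b i ≤ a i).sup f with hA'
  set B' := (Finset.univ.filter fun j => b j ≠ ⊥ ∧ ¬ b j ≤ a j).sup g with hB'
  constructor
  · intro h
    by_contra hlt
    push_neg at hlt
    have hB'le : B' ≤ Finset.univ.sup f :=
      le_trans (Finset.sup_mono (Finset.filter_subset _ _)) h
    have hbot : (⊥ : WithBot ℝ) < B' := lt_of_le_of_lt bot_le hlt
    have hAlt : Finset.univ.sup f < B' := by
      rw [Finset.sup_lt_iff hbot]
      intro i _
      by_cases hp : a i ≠ ⊥ ∧ b i ≤ a i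
      · exact lt_of_le_of_lt
          (Finset.le_sup (Finset.mem_filter.mpr ⟨Finset.mem_univ i, hp⟩)) hlt
      · push_neg at hp
        by_cases ha : a i = ⊥
        · rw [hbf i ha]; exact hbot
        · have hab : a i < b i := hp ha
          have hq : b i ≠ ⊥ ∧ ¬ b i ≤ a i :=
            ⟨(lt_of_le_of_lt bot_le hab).ne', not_le.mpr hab⟩
          exact lt_of_lt_of_le (hs i hab)
            (Finset.le_sup (Finset.mem_filter.mpr ⟨Finset.mem_univ i, hq⟩))
    exact absurd hB'le (not_le.mpr hAlt)
  · intro h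
    apply Finset.sup_le
    intro j _
    by_cases hq : b j ≠ ⊥ ∧ ¬ b j ≤ a j
    · calc g j ≤ B' := Finset.le_sup (Finset.mem_filter.mpr ⟨Finset.mem_univ j, hq⟩)
        _ ≤ A' := h
        _ ≤ Finset.univ.sup f := Finset.sup_mono (Finset.filter_subset _ _)
    · push_neg at hq
      by_cases hb : b j = ⊥
      · rw [hbg j hb]; exact bot_le
      · have hba : b j ≤ a j := hq hb
        exact le_trans (hm' j hba) (Finset.le_sup (Finset.mem_univ j))

theorem maxplus_aux_gt {n : ℕ} (a b f g : Fin n → WithBot ℝ)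
    (hbf : ∀ i, a i = ⊥ → f i = ⊥)
    (hbg : ∀ j, b j = ⊥ → g j = ⊥)
    (hm : ∀ i, a i ≤ b i → f i ≤ g i)
    (hs' : ∀ i, b i < a i → g i < f i) :
    (Finset.univ.sup g < Finset.univ.sup f) ↔
    ((Finset.univ.filter fun j => b j ≠ ⊥ ∧ ¬ b j < a j).sup g <
      (Finset.univ.filter fun i => a i ≠ ⊥ ∧ b i < a i).sup f) := by
  set A' := (Finset.univ.filter fun i => a i ≠ ⊥ ∧ b i < a i).sup f with hA'
  set B' := (Finset.univ.filter fun j => b j ≠ ⊥ ∧ ¬ b j < a j).sup g with hB'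
  constructor
  · intro h
    have hB'le : B' ≤ Finset.univ.sup g := Finset.sup_mono (Finset.filter_subset _ _)
    have hAle : Finset.univ.sup f ≤ A' ⊔ Finset.univ.sup g := by
      apply Finset.sup_le
      intro i _
      by_cases hp : a i ≠ ⊥ ∧ b i < a i
      · exact le_sup_of_le_left
          (Finset.le_sup (Finset.mem_filter.mpr ⟨Finset.mem_univ i, hp⟩))
      · push_neg at hp
        by_cases ha : a i = ⊥
        · rw [hbf i ha]; exact bot_le
        · have hab : a i ≤ b i := hp ha
          exact le_sup_of_le_right (le_trans (hm i hab) (Finset.le_sup (Finset.mem_univ i)))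
    rcases le_sup_iff.mp hAle with hA | hA
    · exact lt_of_le_of_lt hB'le (lt_of_lt_of_le h hA)
    · exact absurd hA (not_le.mpr h)
  · intro h
    have hbot : (⊥ : WithBot ℝ) < A' := lt_of_le_of_lt bot_le h
    have hA'le : A' ≤ Finset.univ.sup f := Finset.sup_mono (Finset.filter_subset _ _)
    have hBlt : Finset.univ.sup g < A' := by
      rw [Finset.sup_lt_iff hbot]
      intro j _
      by_cases hq : b j ≠ ⊥ ∧ ¬ b j < a j
      · exact lt_of_le_of_lt
          (Finset.le_sup (Finset.mem_filter.mpr ⟨Finset.mem_univ j, hq⟩)) h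
      · push_neg at hq
        by_cases hb : b j = ⊥
        · rw [hbg j hb]; exact hbot
        · have hba : b j < a j := hq hb
          have hp : a j ≠ ⊥ ∧ b j < a j := ⟨(lt_of_le_of_lt bot_le hba).ne', hba⟩
          exact lt_of_lt_of_le (hs' j hba)
            (Finset.le_sup (Finset.mem_filter.mpr ⟨Finset.mem_univ j, hp⟩))
    exact lt_of_lt_of_le hBlt hA'le


/-- Reduction of a comparison of two max-plus linear expressions to the
comparison of the maxima restricted to the index sets `S₁` and `S₂`
(Proposition on the elimination of irrelevant indices). Here `R` is either
`≥` or `>` on `WithBot ℝ`, and a maximum over an empty set is `ε = ⊥`. -/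
theorem maxplus_compare_reduce {n : ℕ} (hn : 1 ≤ n)
    (a b : Fin n → WithBot ℝ) (x : Fin n → ℝ)
    (R : WithBot ℝ → WithBot ℝ → Prop)
    (hR : R = (· ≥ ·) ∨ R = (· > ·)) :
    (R (Finset.univ.sup fun i => ((x i : ℝ) : WithBot ℝ) + a i)
       (Finset.univ.sup fun j => ((x j : ℝ) : WithBot ℝ) + b j)) ↔
    (R ((Finset.univ.filter fun i => a i ≠ ⊥ ∧ R (a i) (b i)).sup
          fun i => ((x i : ℝ) : WithBot ℝ) + a i)
       ((Finset.univ.filter fun j => b j ≠ ⊥ ∧ ¬ R (a j) (b j)).sup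
          fun j => ((x j : ℝ) : WithBot ℝ) + b j)) := by
  have hbf : ∀ i, a i = ⊥ → ((x i : ℝ) : WithBot ℝ) + a i = ⊥ := by
    intro i h; rw [h]; exact WithBot.add_bot _
  have hbg : ∀ j, b j = ⊥ → ((x j : ℝ) : WithBot ℝ) + b j = ⊥ := by
    intro j h; rw [h]; exact WithBot.add_bot _
  have hm : ∀ i, a i ≤ b i → ((x i : ℝ) : WithBot ℝ) + a i ≤ ((x i : ℝ) : WithBot ℝ) + b i :=
    fun i h => add_le_add_right h _
  have hm' : ∀ i, b i ≤ a i → ((x i : ℝ) : WithBot ℝ) + b i ≤ ((x i : ℝ) : WithBot ℝ) + a i :=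
    fun i h => add_le_add_right h _
  have hs : ∀ i, a i < b i → ((x i : ℝ) : WithBot ℝ) + a i < ((x i : ℝ) : WithBot ℝ) + b i :=
    fun i h => WithBot.add_lt_add_left WithBot.coe_ne_bot h
  have hs' : ∀ i, b i < a i → ((x i : ℝ) : WithBot ℝ) + b i < ((x i : ℝ) : WithBot ℝ) + a i :=
    fun i h => WithBot.add_lt_add_left WithBot.coe_ne_bot h
  rcases hR with rfl | rfl
  · have := maxplus_aux_ge a b _ _ hbf hbg hm' hs
    simp only [ge_iff_le]
    convert this using 3 <;> exact Finset.filter_congr_decidable ..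
  · have := maxplus_aux_gt a b _ _ hbf hbg hm hs'
    simp only [gt_iff_lt]
    convert this using 3 <;> exact Finset.filter_congr_decidable ..
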